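/- Let τ be the topology on X_n (n ≥ 4) generated by the powerset of {x_1,...,x_{n-2}} together with the two sets {a, x_1} and {b, x_1}, where a, b are the remaining two points. Then |τ| = 10·2^{n-4} and the open set polynomial of τ equals (1 + x + 2x^2 + x^3)(1+x)^{n-3}. -/
import Mathlib


open Polynomial

def IsTopology {n : ℕ} (τ : Finset (Finset (Fin n))) : Prop :=
  ∅ ∈ τ ∧ Finset.univ ∈ τ ∧
    (∀ s ∈ τ, ∀ t ∈ τ, s ∪ t ∈ τ) ∧ (∀ s ∈ τ, ∀ t ∈ τ, s ∩ t ∈ τ)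

def openCount {n : ℕ} (τ : Finset (Finset (Fin n))) (j : ℕ) : ℕ :=
  (τ.filter fun s => s.card = j).card

noncomputable def openPoly {n : ℕ} (τ : Finset (Finset (Fin n))) : Polynomial ℝ :=
  ∑ j ∈ Finset.range (n + 1), Polynomial.C (openCount τ j : ℝ) * Polynomial.X ^ j

lemma sum_pow_card {α : Type*} [DecidableEq α] (u : Finset α) :
    ∑ t ∈ u.powerset, (X : ℝ[X]) ^ t.card = (1 + X) ^ u.card := by
  have h := Finset.prod_add (fun _ : α => (X : ℝ[X])) (fun _ => 1) u
  simp only [Finset.prod_const, one_pow, mul_one, Finset.prod_const_one] at h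
  rw [← h, add_comm]

lemma openPoly_eq_sum {n : ℕ} (τ : Finset (Finset (Fin n))) :
    openPoly τ = ∑ s ∈ τ, (X : ℝ[X]) ^ s.card := by
  unfold openPoly openCount
  rw [← Finset.sum_fiberwise_of_maps_to
      (g := fun s : Finset (Fin n) => s.card) (t := Finset.range (n + 1))
      (fun s _ => Finset.mem_range.2 (Nat.lt_succ_of_le (by simpa using s.card_le_univ)))
      (fun s : Finset (Fin n) => (X : ℝ[X]) ^ s.card)]
  refine Finset.sum_congr rfl fun j _ => ?_
  rw [Finset.sum_congr rfl (fun s hs => by rw [(Finset.mem_filter.1 hs).2]),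
    Finset.sum_const, nsmul_eq_mul]
  simp

lemma eval_one_openPoly {n : ℕ} (τ : Finset (Finset (Fin n))) :
    (openPoly τ).eval 1 = (τ.card : ℝ) := by
  rw [openPoly_eq_sum]
  simp [Polynomial.eval_finset_sum]

def tau0 {n : ℕ} (a b x₁ : Fin n) : Finset (Finset (Fin n)) :=
  (Finset.univ : Finset (Fin n)).powerset.filter (fun s => (a ∈ s ∨ b ∈ s) → x₁ ∈ s)

lemma mem_tau0 {n : ℕ} (a b x₁ : Fin n) (s : Finset (Fin n)) :
    s ∈ tau0 a b x₁ ↔ ((a ∈ s ∨ b ∈ s) → x₁ ∈ s) := by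
  simp [tau0]

lemma tau0_top {n : ℕ} (a b x₁ : Fin n) : IsTopology (tau0 a b x₁) := by
  refine ⟨by simp [mem_tau0], by simp [mem_tau0], ?_, ?_⟩
  · intro s hs t ht
    rw [mem_tau0] at hs ht ⊢
    simp only [Finset.mem_union]
    tauto
  · intro s hs t ht
    rw [mem_tau0] at hs ht ⊢
    simp only [Finset.mem_inter]
    tauto

lemma tau0_decomp {n : ℕ} (a b x₁ : Fin n) (K : Finset (Fin n))
    (hKmem : ∀ i, i ∈ K ↔ (i ≠ a ∧ i ≠ b)) (hab : a ≠ b) (hax : a ≠ x₁) (hbx : b ≠ x₁)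
    (hxK : x₁ ∈ K) :
    tau0 a b x₁ = K.powerset
      ∪ (K.erase x₁).powerset.image (fun S => insert a (insert x₁ S))
      ∪ (K.erase x₁).powerset.image (fun S => insert b (insert x₁ S))
      ∪ (K.erase x₁).powerset.image (fun S => insert a (insert b (insert x₁ S))) := by
  have haK : a ∉ K := fun h => ((hKmem a).1 h).1 rfl
  have hbK : b ∉ K := fun h => ((hKmem b).1 h).2 rfl
  ext s
  simp only [Finset.mem_union, Finset.mem_powerset, Finset.mem_image, mem_tau0]
  constructor
  · intro hs
    by_cases hA : a ∈ s <;> by_cases hB : b ∈ s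
    · have hx : x₁ ∈ s := hs (Or.inl hA)
      refine Or.inr ⟨((s.erase a).erase b).erase x₁, ?_, ?_⟩
      · intro i hi
        simp only [Finset.mem_erase] at hi
        obtain ⟨hix, hib, hia, his⟩ := hi
        exact Finset.mem_erase.2 ⟨hix, (hKmem i).2 ⟨hia, hib⟩⟩
      · rw [Finset.insert_erase
            (Finset.mem_erase.2 ⟨Ne.symm hbx, Finset.mem_erase.2 ⟨Ne.symm hax, hx⟩⟩),
          Finset.insert_erase (Finset.mem_erase.2 ⟨Ne.symm hab, hB⟩),
          Finset.insert_erase hA]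
    · have hx : x₁ ∈ s := hs (Or.inl hA)
      refine Or.inl (Or.inl (Or.inr ⟨(s.erase a).erase x₁, ?_, ?_⟩))
      · intro i hi
        simp only [Finset.mem_erase] at hi
        obtain ⟨hix, hia, his⟩ := hi
        exact Finset.mem_erase.2 ⟨hix, (hKmem i).2 ⟨hia, fun h => hB (h ▸ his)⟩⟩
      · rw [Finset.insert_erase (Finset.mem_erase.2 ⟨Ne.symm hax, hx⟩),
          Finset.insert_erase hA]
    · have hx : x₁ ∈ s := hs (Or.inr hB)
      refine Or.inl (Or.inr ⟨(s.erase b).erase x₁, ?_, ?_⟩)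
      · intro i hi
        simp only [Finset.mem_erase] at hi
        obtain ⟨hix, hib, his⟩ := hi
        exact Finset.mem_erase.2 ⟨hix, (hKmem i).2 ⟨fun h => hA (h ▸ his), hib⟩⟩
      · rw [Finset.insert_erase (Finset.mem_erase.2 ⟨Ne.symm hbx, hx⟩),
          Finset.insert_erase hB]
    · exact Or.inl (Or.inl (Or.inl fun i hi =>
        (hKmem i).2 ⟨fun h => hA (h ▸ hi), fun h => hB (h ▸ hi)⟩))
  · rintro (((hsK | ⟨S, hS, rfl⟩) | ⟨S, hS, rfl⟩) | ⟨S, hS, rfl⟩)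
    · intro h
      exfalso
      rcases h with h | h
      · exact haK (hsK h)
      · exact hbK (hsK h)
    all_goals intro _ ; simp

lemma tau0_sum {n : ℕ} (a b x₁ : Fin n) (K : Finset (Fin n))
    (hKmem : ∀ i, i ∈ K ↔ (i ≠ a ∧ i ≠ b)) (hab : a ≠ b) (hax : a ≠ x₁) (hbx : b ≠ x₁)
    (hxK : x₁ ∈ K) :
    ∑ s ∈ tau0 a b x₁, (X : ℝ[X]) ^ s.card =
      (1 + X) ^ K.card + 2 * X ^ 2 * (1 + X) ^ (K.card - 1)
        + X ^ 3 * (1 + X) ^ (K.card - 1) := by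
  classical
  have haK : a ∉ K := fun h => ((hKmem a).1 h).1 rfl
  have hbK : b ∉ K := fun h => ((hKmem b).1 h).2 rfl
  set L : Finset (Fin n) := K.erase x₁ with hL_def
  have hLsub : ∀ S : Finset (Fin n), S ⊆ L → a ∉ S ∧ b ∉ S ∧ x₁ ∉ S := by
    intro S hS
    refine ⟨fun h => haK (Finset.mem_of_mem_erase (hS h)),
      fun h => hbK (Finset.mem_of_mem_erase (hS h)),
      fun h => (Finset.mem_erase.1 (hS h)).1 rfl⟩
  -- the four classes
  set A0 : Finset (Finset (Fin n)) := K.powerset with hA0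
  set A1 := L.powerset.image (fun S => insert a (insert x₁ S)) with hA1
  set A2 := L.powerset.image (fun S => insert b (insert x₁ S)) with hA2
  set A3 := L.powerset.image (fun S => insert a (insert b (insert x₁ S))) with hA3
  have hA0m : ∀ s ∈ A0, a ∉ s ∧ b ∉ s := by
    intro s hs
    rw [hA0, Finset.mem_powerset] at hs
    exact ⟨fun h => haK (hs h), fun h => hbK (hs h)⟩
  have hA1m : ∀ s ∈ A1, a ∈ s ∧ b ∉ s := by
    intro s hs
    rw [hA1, Finset.mem_image] at hs
    obtain ⟨S, hS, rfl⟩ := hs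
    obtain ⟨-, hb', -⟩ := hLsub S (Finset.mem_powerset.1 hS)
    simp [Finset.mem_insert, Ne.symm hab, Ne.symm hbx, hbx, hb']
  have hA2m : ∀ s ∈ A2, b ∈ s ∧ a ∉ s := by
    intro s hs
    rw [hA2, Finset.mem_image] at hs
    obtain ⟨S, hS, rfl⟩ := hs
    obtain ⟨ha', -, -⟩ := hLsub S (Finset.mem_powerset.1 hS)
    simp [Finset.mem_insert, hab, hax, ha']
  have hA3m : ∀ s ∈ A3, a ∈ s ∧ b ∈ s := by
    intro s hs
    rw [hA3, Finset.mem_image] at hs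
    obtain ⟨S, hS, rfl⟩ := hs
    simp
  have d1 : Disjoint A0 A1 := by
    rw [Finset.disjoint_left]
    intro s hs hs'
    exact (hA0m s hs).1 (hA1m s hs').1
  have d2 : Disjoint (A0 ∪ A1) A2 := by
    rw [Finset.disjoint_left]
    intro s hs hs'
    rcases Finset.mem_union.1 hs with h | h
    · exact (hA0m s h).2 (hA2m s hs').1
    · exact (hA2m s hs').2 (hA1m s h).1
  have d3 : Disjoint (A0 ∪ A1 ∪ A2) A3 := by
    rw [Finset.disjoint_left]
    intro s hs hs'
    rcases Finset.mem_union.1 hs with h | h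
    · rcases Finset.mem_union.1 h with h' | h'
      · exact (hA0m s h').1 (hA3m s hs').1
      · exact (hA1m s h').2 (hA3m s hs').2
    · exact (hA2m s h).2 (hA3m s hs').1
  have hLcard : L.card = K.card - 1 := Finset.card_erase_of_mem hxK
  -- injectivity
  have inj1 : ∀ S ∈ L.powerset, ∀ S' ∈ L.powerset, (fun S => insert a (insert x₁ S)) S = (fun S => insert a (insert x₁ S)) S' → S = S' := by
    intro S hS S' hS' h
    obtain ⟨ha1, -, hx1⟩ := hLsub S (Finset.mem_powerset.1 hS)
    obtain ⟨ha2, -, hx2⟩ := hLsub S' (Finset.mem_powerset.1 hS')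
    have := congrArg (fun t : Finset (Fin n) => (t.erase a).erase x₁) h
    simpa [Finset.erase_insert, Finset.mem_insert, Ne.symm hax, ha1, ha2, hx1, hx2,
      Finset.erase_insert_of_ne (Ne.symm hax)] using this
  have inj2 : ∀ S ∈ L.powerset, ∀ S' ∈ L.powerset, (fun S => insert b (insert x₁ S)) S = (fun S => insert b (insert x₁ S)) S' → S = S' := by
    intro S hS S' hS' h
    obtain ⟨-, hb1, hx1⟩ := hLsub S (Finset.mem_powerset.1 hS)
    obtain ⟨-, hb2, hx2⟩ := hLsub S' (Finset.mem_powerset.1 hS')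
    have := congrArg (fun t : Finset (Fin n) => (t.erase b).erase x₁) h
    simpa [Finset.erase_insert, Finset.mem_insert, Ne.symm hbx, hb1, hb2, hx1, hx2,
      Finset.erase_insert_of_ne (Ne.symm hbx)] using this
  have inj3 : ∀ S ∈ L.powerset, ∀ S' ∈ L.powerset, (fun S => insert a (insert b (insert x₁ S))) S = (fun S => insert a (insert b (insert x₁ S))) S' → S = S' := by
    intro S hS S' hS' h
    obtain ⟨ha1, hb1, hx1⟩ := hLsub S (Finset.mem_powerset.1 hS)
    obtain ⟨ha2, hb2, hx2⟩ := hLsub S' (Finset.mem_powerset.1 hS')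
    have := congrArg (fun t : Finset (Fin n) => ((t.erase a).erase b).erase x₁) h
    simpa [Finset.erase_insert, Finset.mem_insert, hab, hax, hbx, Ne.symm hab,
      Ne.symm hax, Ne.symm hbx, ha1, ha2, hb1, hb2, hx1, hx2,
      Finset.erase_insert_of_ne (Ne.symm hax), Finset.erase_insert_of_ne (Ne.symm hbx),
      Finset.erase_insert_of_ne (Ne.symm hab)] using this
  -- sums over each class
  have e0 : ∑ s ∈ A0, (X : ℝ[X]) ^ s.card = (1 + X) ^ K.card := sum_pow_card K
  have e1 : ∑ s ∈ A1, (X : ℝ[X]) ^ s.card = X ^ 2 * (1 + X) ^ L.card := by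
    rw [hA1, Finset.sum_image inj1,
      ← sum_pow_card L, Finset.mul_sum]
    refine Finset.sum_congr rfl fun S hS => ?_
    obtain ⟨ha', -, hx'⟩ := hLsub S (Finset.mem_powerset.1 hS)
    rw [Finset.card_insert_of_notMem (by simp [Finset.mem_insert, hax, ha']),
      Finset.card_insert_of_notMem hx']
    ring
  have e2 : ∑ s ∈ A2, (X : ℝ[X]) ^ s.card = X ^ 2 * (1 + X) ^ L.card := by
    rw [hA2, Finset.sum_image inj2,
      ← sum_pow_card L, Finset.mul_sum]
    refine Finset.sum_congr rfl fun S hS => ?_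
    obtain ⟨-, hb', hx'⟩ := hLsub S (Finset.mem_powerset.1 hS)
    rw [Finset.card_insert_of_notMem (by simp [Finset.mem_insert, hbx, hb']),
      Finset.card_insert_of_notMem hx']
    ring
  have e3 : ∑ s ∈ A3, (X : ℝ[X]) ^ s.card = X ^ 3 * (1 + X) ^ L.card := by
    rw [hA3, Finset.sum_image inj3,
      ← sum_pow_card L, Finset.mul_sum]
    refine Finset.sum_congr rfl fun S hS => ?_
    obtain ⟨ha', hb', hx'⟩ := hLsub S (Finset.mem_powerset.1 hS)
    rw [Finset.card_insert_of_notMem (by simp [Finset.mem_insert, hab, hax, ha']),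
      Finset.card_insert_of_notMem (by simp [Finset.mem_insert, hbx, hb']),
      Finset.card_insert_of_notMem hx']
    ring
  rw [tau0_decomp a b x₁ K hKmem hab hax hbx hxK]
  rw [Finset.sum_union d3, Finset.sum_union d2, Finset.sum_union d1, e0, e1, e2, e3, hLcard]
  ring

/-- The topology generated by `P(X_{n-2})` together with `{a, x₁}` and `{b, x₁}` has
`10·2^{n-4}` open sets and open set polynomial `(1 + x + 2x² + x³)(1+x)^{n-3}`. -/
theorem topology_two_doubletons {n : ℕ} (hn : 4 ≤ n)
    (τ : Finset (Finset (Fin n))) (hτ : IsTopology τ)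
    (hsub : (Finset.univ.filter fun i : Fin n => (i : ℕ) < n - 2).powerset ∪
        {insert (⟨n - 2, by omega⟩ : Fin n) {(⟨0, by omega⟩ : Fin n)},
         insert (⟨n - 1, by omega⟩ : Fin n) {(⟨0, by omega⟩ : Fin n)}} ⊆ τ)
    (hmin : ∀ τ' : Finset (Finset (Fin n)), IsTopology τ' →
      (Finset.univ.filter fun i : Fin n => (i : ℕ) < n - 2).powerset ∪
        {insert (⟨n - 2, by omega⟩ : Fin n) {(⟨0, by omega⟩ : Fin n)},
         insert (⟨n - 1, by omega⟩ : Fin n) {(⟨0, by omega⟩ : Fin n)}} ⊆ τ' → τ ⊆ τ') :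
    τ.card = 10 * 2 ^ (n - 4) ∧
    openPoly τ = (1 + Polynomial.X + 2 * Polynomial.X ^ 2 + Polynomial.X ^ 3) *
      (1 + Polynomial.X) ^ (n - 3) := by
  classical
  set a : Fin n := ⟨n - 2, by omega⟩ with ha_def
  set b : Fin n := ⟨n - 1, by omega⟩ with hb_def
  set x₁ : Fin n := ⟨0, by omega⟩ with hx_def
  set K : Finset (Fin n) := Finset.univ.filter (fun i : Fin n => (i : ℕ) < n - 2) with hK_def
  have hgen : K.powerset ∪ {insert a {x₁}, insert b {x₁}} ⊆ τ := hsub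
  have hmin' : ∀ τ' : Finset (Finset (Fin n)), IsTopology τ' →
      K.powerset ∪ {insert a {x₁}, insert b {x₁}} ⊆ τ' → τ ⊆ τ' := hmin
  clear hsub hmin
  have hKmem : ∀ i : Fin n, i ∈ K ↔ (i ≠ a ∧ i ≠ b) := by
    intro i
    have := i.isLt
    simp only [hK_def, Finset.mem_filter, Finset.mem_univ, true_and, ne_eq, Fin.ext_iff,
      ha_def, hb_def]
    omega
  have hab : a ≠ b := by simp [ha_def, hb_def, Fin.ext_iff]; omega
  have hax : a ≠ x₁ := by simp [ha_def, hx_def, Fin.ext_iff]; omega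
  have hbx : b ≠ x₁ := by simp [hb_def, hx_def, Fin.ext_iff]; omega
  have haK : a ∉ K := fun h => ((hKmem a).1 h).1 rfl
  have hbK : b ∉ K := fun h => ((hKmem b).1 h).2 rfl
  have hxK : x₁ ∈ K := (hKmem x₁).2 ⟨Ne.symm hax, Ne.symm hbx⟩
  have hKcard : K.card = n - 2 := by
    have hmap : K = Finset.map
        ⟨fun j : Fin (n - 2) => Fin.castLE (Nat.sub_le n 2) j, Fin.castLE_injective _⟩
        Finset.univ := by
      ext i
      simp only [hK_def, Finset.mem_filter, Finset.mem_univ, true_and, Finset.mem_map,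
        Function.Embedding.coeFn_mk]
      constructor
      · intro h
        exact ⟨⟨(i : ℕ), h⟩, by simp [Fin.ext_iff]⟩
      · rintro ⟨j, rfl⟩
        simpa using j.isLt
    rw [hmap]
    simp
  -- τ equals the model topology
  have hgen₀ : K.powerset ∪ {insert a {x₁}, insert b {x₁}} ⊆ tau0 a b x₁ := by
    intro s hs
    rw [mem_tau0]
    rcases Finset.mem_union.1 hs with h | h
    · rw [Finset.mem_powerset] at h
      intro hc
      exfalso
      rcases hc with hc | hc
      · exact haK (h hc)
      · exact hbK (h hc)
    · simp only [Finset.mem_insert, Finset.mem_singleton] at h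
      rcases h with rfl | rfl <;> simp
  have hτeq : τ = tau0 a b x₁ := by
    refine Finset.Subset.antisymm (hmin' _ (tau0_top a b x₁) hgen₀) ?_
    intro s hs
    rw [mem_tau0] at hs
    obtain ⟨h0, huniv, hcup, hcap⟩ := hτ
    have hSK : s ∩ K ∈ τ := hgen (Finset.mem_union_left _
      (Finset.mem_powerset.2 Finset.inter_subset_right))
    have hA : insert a {x₁} ∈ τ := hgen (by simp)
    have hB : insert b {x₁} ∈ τ := hgen (by simp)
    by_cases hA' : a ∈ s <;> by_cases hB' : b ∈ s
    · have hx1 : x₁ ∈ s := hs (Or.inl hA')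
      have : s = (s ∩ K ∪ insert a {x₁}) ∪ insert b {x₁} := by
        ext i
        by_cases hia : i = a
        · subst hia; simp [hA']
        by_cases hib : i = b
        · subst hib; simp [hB']
        simp only [Finset.mem_union, Finset.mem_inter, Finset.mem_insert,
          Finset.mem_singleton, hKmem]
        constructor
        · intro h; exact Or.inl (Or.inl ⟨h, hia, hib⟩)
        · rintro ((⟨h, -⟩ | (rfl | rfl)) | (rfl | rfl))
          · exact h
          · exact absurd rfl hia
          · exact hx1
          · exact absurd rfl hib
          · exact hx1
      rw [this]
      exact hcup _ (hcup _ hSK _ hA) _ hB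
    · have hx1 : x₁ ∈ s := hs (Or.inl hA')
      have : s = s ∩ K ∪ insert a {x₁} := by
        ext i
        by_cases hia : i = a
        · subst hia; simp [hA']
        simp only [Finset.mem_union, Finset.mem_inter, Finset.mem_insert,
          Finset.mem_singleton, hKmem]
        constructor
        · intro h
          refine Or.inl ⟨h, hia, fun hib => ?_⟩
          subst hib; exact hB' h
        · rintro (⟨h, -⟩ | (rfl | rfl))
          · exact h
          · exact absurd rfl hia
          · exact hx1
      rw [this]; exact hcup _ hSK _ hA
    · have hx1 : x₁ ∈ s := hs (Or.inr hB')
      have : s = s ∩ K ∪ insert b {x₁} := by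
        ext i
        by_cases hib : i = b
        · subst hib; simp [hB']
        simp only [Finset.mem_union, Finset.mem_inter, Finset.mem_insert,
          Finset.mem_singleton, hKmem]
        constructor
        · intro h
          refine Or.inl ⟨h, fun hia => ?_, hib⟩
          subst hia; exact hA' h
        · rintro (⟨h, -⟩ | (rfl | rfl))
          · exact h
          · exact absurd rfl hib
          · exact hx1
      rw [this]; exact hcup _ hSK _ hB
    · have : s ⊆ K := fun i hi => (hKmem i).2
        ⟨fun h => hA' (h ▸ hi), fun h => hB' (h ▸ hi)⟩
      exact hgen (Finset.mem_union_left _ (Finset.mem_powerset.2 this))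
  -- polynomial identity
  have hsum := tau0_sum a b x₁ K hKmem hab hax hbx hxK
  rw [hKcard] at hsum
  have hpoly : openPoly τ = (1 + Polynomial.X + 2 * Polynomial.X ^ 2 + Polynomial.X ^ 3) *
      (1 + Polynomial.X) ^ (n - 3) := by
    rw [openPoly_eq_sum, hτeq, hsum]
    have h32 : n - 2 - 1 = n - 3 := by omega
    have hpow : (1 + X : ℝ[X]) ^ (n - 2) = (1 + X) * (1 + X) ^ (n - 3) := by
      rw [← pow_succ']
      congr 1
      omega
    rw [h32, hpow]
    ring
  refine ⟨?_, hpoly⟩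
  -- cardinality
  have hcard : (τ.card : ℝ) = (openPoly τ).eval 1 := (eval_one_openPoly τ).symm
  rw [hpoly] at hcard
  simp only [Polynomial.eval_mul, Polynomial.eval_pow, Polynomial.eval_add,
    Polynomial.eval_one, Polynomial.eval_X, Polynomial.eval_ofNat] at hcard
  have h5 : (τ.card : ℝ) = 5 * 2 ^ (n - 3) := by
    rw [hcard]; norm_num
  have h10 : ((10 * 2 ^ (n - 4) : ℕ) : ℝ) = 5 * 2 ^ (n - 3) := by
    have : n - 3 = (n - 4) + 1 := by omega
    rw [this]
    push_cast
    ring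
  exact_mod_cast h5.trans h10.symm
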